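/- Let q ∈ ℂ with |q| < 1/2, and let ψ(q) = ∑_{n≥0} q^{n(n+1)/2} be Ramanujan's theta function. Then the family ((−1)^{ℓ(c)} q^{|c|}) indexed by compositions c ∈ C_{P₃} into triangular parts is summable, ψ(q) ≠ 0, and ∑_{c∈C_{P₃}} (−1)^{ℓ(c)} q^{|c|} = 1/ψ(q). -/

import Mathlib

/-! Write `T m = m (m + 1) / 2`. A composition into triangular parts is a word over the alphabet
`{T (m + 1) | m ∈ ℕ}`, and with `f m = -q ^ T (m + 1)` its summand `(-1)^{ℓ(c)} q^{|c|}` is the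
product of `f` along the word. Since `∑ ‖f m‖ ≤ ‖q‖ / (1 - ‖q‖) < 1` for `‖q‖ < 1/2`, the sum over
all words converges absolutely to the geometric series `∑ₙ (∑ f)ⁿ = (1 - ∑ f)⁻¹`, and
`1 - ∑ f = ψ(q)`. -/

section TupleProducts

variable {β : Type*}

theorem summable_norm_prod_tuple {R : Type*} [NormedCommRing R] {f : β → R}
    (hf : Summable (‖f ·‖)) : ∀ n : ℕ, Summable fun v : Fin n → β => ‖∏ i, f (v i)‖
  | 0 => .of_finite
  | n + 1 => by
    rw [← (Fin.consEquiv fun _ => β).summable_iff]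
    simpa [Function.comp_def, Fin.prod_univ_succ] using hf.mul_norm (summable_norm_prod_tuple hf n)

theorem tsum_prod_tuple {R : Type*} [NormedCommRing R] [CompleteSpace R] {f : β → R}
    (hf : Summable (‖f ·‖)) : ∀ n : ℕ, ∑' v : Fin n → β, ∏ i, f (v i) = (∑' x, f x) ^ n
  | 0 => by simp
  | n + 1 => by
    rw [← (Fin.consEquiv fun _ => β).tsum_eq]
    simp only [Fin.consEquiv_apply, Fin.prod_univ_succ, Fin.cons_zero, Fin.cons_succ]
    rw [← tsum_mul_tsum_of_summable_norm hf (summable_norm_prod_tuple hf n),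
      tsum_prod_tuple hf n, pow_succ']

theorem hasSum_list_prod_map {𝕜 : Type*} [NormedField 𝕜] [CompleteSpace 𝕜] {f : β → 𝕜}
    (hf : Summable (‖f ·‖)) (hf_lt : ∑' x, ‖f x‖ < 1) :
    HasSum (fun l : List β => (l.map f).prod) (1 - ∑' x, f x)⁻¹ := by
  have hnorm : Summable fun v : (Σ n, Fin n → β) => ‖∏ i, f (v.2 i)‖ := by
    refine (summable_sigma_of_nonneg fun _ => norm_nonneg _).2
      ⟨summable_norm_prod_tuple hf, ?_⟩
    have hgeom := summable_geometric_of_lt_one (tsum_nonneg fun x => norm_nonneg (f x)) hf_lt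
    refine hgeom.congr fun n => ?_
    simpa [norm_prod] using (tsum_prod_tuple (f := (‖f ·‖)) (by simpa using hf) n).symm
  have hsigma : HasSum (fun v : (Σ n, Fin n → β) => ∏ i, f (v.2 i)) (1 - ∑' x, f x)⁻¹ :=
    (hasSum_geometric_of_norm_lt_one ((norm_tsum_le_tsum_norm hf).trans_lt hf_lt)).sigma_of_hasSum
      (fun n => tsum_prod_tuple hf n ▸ (summable_norm_prod_tuple hf n).of_norm.hasSum)
      hnorm.of_norm
  rw [← List.equivSigmaTuple.symm.hasSum_iff]
  simpa [Function.comp_def, List.prod_ofFn] using hsigma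

end TupleProducts

theorem List.prod_map_pow_eq_pow_sum {M : Type*} [Monoid M] (q : M) (l : List ℕ) :
    (l.map (q ^ ·)).prod = q ^ l.sum := by
  induction l with
  | nil => simp
  | cons k l ih => simp [pow_add, ih]

theorem List.prod_map_neg_pow {R : Type*} [Monoid R] [HasDistribNeg R] (q : R) (l : List ℕ) :
    (l.map fun k => -q ^ k).prod = (-1) ^ l.length * q ^ l.sum := by
  simpa [Function.comp_def, List.prod_map_pow_eq_pow_sum] using List.prod_map_neg (l.map (q ^ ·))

def triangle (n : ℕ) : ℕ := n * (n + 1) / 2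

theorem two_mul_triangle (n : ℕ) : 2 * triangle n = n * (n + 1) :=
  Nat.two_mul_div_two_of_even (Nat.even_mul_succ_self n)

theorem triangle_succ (n : ℕ) : triangle (n + 1) = triangle n + (n + 1) := by
  have h := two_mul_triangle n
  have h' := two_mul_triangle (n + 1)
  nlinarith

theorem le_triangle (n : ℕ) : n ≤ triangle n := by
  cases n with
  | zero => exact Nat.zero_le _
  | succ n => rw [triangle_succ]; omega

theorem triangle_strictMono : StrictMono triangle :=
  strictMono_nat_of_lt_succ fun n => by rw [triangle_succ]; omega

theorem range_triangle_succ :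
    Set.range (fun m => triangle (m + 1)) = {i | ∃ n, 1 ≤ n ∧ 2 * i = n * (n + 1)} := by
  ext i
  constructor
  · rintro ⟨m, rfl⟩
    exact ⟨m + 1, by omega, two_mul_triangle (m + 1)⟩
  · rintro ⟨n, hn, hi⟩
    refine ⟨n - 1, ?_⟩
    have := two_mul_triangle n
    simp only [Nat.sub_add_cancel hn]
    omega

theorem triangle_succ_injective : Function.Injective fun m => triangle (m + 1) :=
  triangle_strictMono.injective.comp (add_left_injective 1)

noncomputable def triangularCompositionEquiv :
    List ℕ ≃ {l : List ℕ // ∀ i ∈ l, ∃ n : ℕ, 1 ≤ n ∧ 2 * i = n * (n + 1)} :=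
  (Equiv.ofInjective _ (List.map_injective_iff.2 triangle_succ_injective)).trans
    (Equiv.subtypeEquivRight fun l => by rw [Set.range_list_map, range_triangle_succ]; rfl)

@[simp]
theorem coe_triangularCompositionEquiv (l : List ℕ) :
    (triangularCompositionEquiv l : List ℕ) = l.map fun m => triangle (m + 1) :=
  rfl

theorem summable_pow_triangle {r : ℝ} (h0 : 0 ≤ r) (h1 : r < 1) :
    Summable fun n => r ^ triangle n :=
  (summable_geometric_of_lt_one h0 h1).of_nonneg_of_le (fun _ => pow_nonneg h0 _)
    fun n => pow_le_pow_of_le_one h0 h1.le (le_triangle n)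

theorem tsum_pow_triangle_succ_lt_one {r : ℝ} (h0 : 0 ≤ r) (h : r < 1 / 2) :
    ∑' m, r ^ triangle (m + 1) < 1 := by
  have h1 : r < 1 := by linarith
  calc ∑' m, r ^ triangle (m + 1)
      ≤ ∑' m, r ^ (m + 1) :=
        ((summable_nat_add_iff 1).2 (summable_pow_triangle h0 h1)).tsum_le_tsum
          (fun m => pow_le_pow_of_le_one h0 h1.le (le_triangle (m + 1)))
          ((summable_nat_add_iff 1).2 (summable_geometric_of_lt_one h0 h1))
    _ = r / (1 - r) := by
        simp only [pow_succ, tsum_mul_right, tsum_geometric_of_lt_one h0 h1]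
        field_simp
    _ < 1 := by rw [div_lt_one (by linarith)]; linarith

/-- The reciprocal of Ramanujan's theta function `ψ(q) = ∑_{n≥0} q^{n(n+1)/2}` is the
sum of `(-1)^{ℓ(c)} q^{|c|}` over compositions into triangular parts, for `|q| < 1/2`. -/
theorem reciprocal_psi_as_composition_series (q : ℂ) (hq : ‖q‖ < 1 / 2) :
    Summable (fun c : {l : List ℕ // ∀ i ∈ l, ∃ n : ℕ, 1 ≤ n ∧ 2 * i = n * (n + 1)} =>
        (-1 : ℂ) ^ c.val.length * q ^ c.val.sum) ∧
    (∑' n : ℕ, q ^ (n * (n + 1) / 2)) ≠ 0 ∧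
    ∑' c : {l : List ℕ // ∀ i ∈ l, ∃ n : ℕ, 1 ≤ n ∧ 2 * i = n * (n + 1)},
        (-1 : ℂ) ^ c.val.length * q ^ c.val.sum
      = (∑' n : ℕ, q ^ (n * (n + 1) / 2))⁻¹ := by
  set f : ℕ → ℂ := fun m => -q ^ triangle (m + 1)
  have hq1 : ‖q‖ < 1 := by linarith
  have hθ : Summable fun n => ‖q ^ triangle n‖ := by
    simpa only [norm_pow] using summable_pow_triangle (norm_nonneg q) hq1
  have hf : Summable (‖f ·‖) := (summable_nat_add_iff 1).2 hθ |>.congr fun m => by simp [f]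
  have hf_lt : ∑' m, ‖f m‖ < 1 := by
    simpa [f] using tsum_pow_triangle_succ_lt_one (norm_nonneg q) hq
  have hψ : ∑' n : ℕ, q ^ (n * (n + 1) / 2) = 1 - ∑' m, f m := by
    change ∑' n, q ^ triangle n = _
    rw [hθ.of_norm.tsum_eq_zero_add, tsum_neg]
    simp [triangle, sub_neg_eq_add]
  have hψ_ne : ∑' n : ℕ, q ^ (n * (n + 1) / 2) ≠ 0 := hψ ▸ sub_ne_zero.2 fun h => by
    simpa [← h] using (norm_tsum_le_tsum_norm hf).trans_lt hf_lt
  have hsum : HasSum (fun c : {l : List ℕ // ∀ i ∈ l, ∃ n : ℕ, 1 ≤ n ∧ 2 * i = n * (n + 1)} =>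
      (-1 : ℂ) ^ c.val.length * q ^ c.val.sum) (∑' n : ℕ, q ^ (n * (n + 1) / 2))⁻¹ := by
    rw [← triangularCompositionEquiv.hasSum_iff, hψ]
    simpa [Function.comp_def, f, ← List.prod_map_neg_pow] using hasSum_list_prod_map hf hf_lt
  exact ⟨hsum.summable, hψ_ne, hsum.tsum_eq⟩
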